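/- Let V : ℝ³ → ℝ be continuous and supported in the closed ball of radius R > 0, and let f ∈ C²(ℝ³) satisfy −Δf(x) + (1/2) V(x) f(x) = 0 for all x ∈ ℝ³, together with f(x) = 1 − a/|x| for all |x| ≥ R (for some constant a ∈ ℝ). Then ∫_{ℝ³} V(x) f(x) dx = 8π a. -/

import Mathlib

open MeasureTheory Real

/-- The Laplacian of a function on `ℝ³`, as the sum of the second partial derivatives
in the coordinate directions. -/
noncomputable def laplacian3 (f : EuclideanSpace ℝ (Fin 3) → ℝ)
    (x : EuclideanSpace ℝ (Fin 3)) : ℝ :=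
  ∑ i : Fin 3,
    fderiv ℝ (fun y => fderiv ℝ f y (EuclideanSpace.single i 1)) x (EuclideanSpace.single i 1)

/-!
Compare `f` with `1 + a φ`, where `φ` is a smooth radial function equal to the Coulomb potential
`-1/|x|` outside the ball of radius `R`. Their difference is a compactly supported `C²` function,
so its Laplacian integrates to zero, and the equation gives `∫ V f = 2 ∫ Δf = 2a ∫ Δφ`. For a
radial function `φ = h(|x|²)` on `ℝⁿ`, `rⁿ⁻¹ Δφ` is the derivative in `r` of the flux
`2 rⁿ h'(r²)`, so `∫ Δφ` is `n |B₁|` times the flux through any sphere outside which `φ` is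
harmonic; for the Coulomb potential in `ℝ³` the flux is `1`, whence `∫ Δφ = 4π`.
-/

open Set Filter Topology InnerProductSpace Laplacian
open scoped RealInnerProductSpace

section Laplacian

variable {E F : Type*} [NormedAddCommGroup E] [InnerProductSpace ℝ E] [FiniteDimensional ℝ E]
  [NormedAddCommGroup F] [NormedSpace ℝ F]

theorem support_laplacian_subset (f : E → F) : Function.support (Δ f) ⊆ tsupport f := by
  intro x hx
  by_contra h
  rw [notMem_tsupport_iff_eventuallyEq] at h
  exact hx (by simpa [Pi.zero_def] using (laplacian_congr_nhds h).eq_of_nhds)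

theorem HasCompactSupport.laplacian {f : E → F} (hf : HasCompactSupport f) :
    HasCompactSupport (Δ f) :=
  hf.mono' (support_laplacian_subset f)

theorem ContDiff.continuous_laplacian {f : E → F} (hf : ContDiff ℝ 2 f) : Continuous (Δ f) := by
  rw [laplacian_eq_iteratedFDeriv_stdOrthonormalBasis]
  fun_prop

theorem laplacian_eq_sum_fderiv_fderiv {f : E → F} (hf : ContDiff ℝ 2 f) {ι : Type*} [Fintype ι]
    (b : OrthonormalBasis ι ℝ E) :
    Δ f = fun x ↦ ∑ i, fderiv ℝ (fun y ↦ fderiv ℝ f y (b i)) x (b i) := by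
  rw [laplacian_eq_iteratedFDeriv_orthonormalBasis f b]
  ext x
  refine Finset.sum_congr rfl fun i _ ↦ ?_
  rw [iteratedFDeriv_two_apply, fderiv_clm_apply _ (differentiableAt_const _)]
  · simp
  · exact (hf.fderiv_right (m := 1) (by norm_num)).differentiable one_ne_zero x

theorem laplacian_const_add_smul {f : E → F} (hf : ContDiff ℝ 2 f) (c : F) (a : ℝ) :
    Δ (fun x ↦ c + a • f x) = a • Δ f := by
  have haf : ContDiff ℝ 2 (a • f) := hf.const_smul a
  ext x
  rw [show (fun x ↦ c + a • f x) = (fun _ ↦ c) + a • f from rfl,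
    contDiffAt_const.laplacian_add haf.contDiffAt, laplacian_smul a hf.contDiffAt]
  simp

end Laplacian

section Integral

variable {E F : Type*} [NormedAddCommGroup E] [NormedSpace ℝ E] [FiniteDimensional ℝ E]
  [MeasurableSpace E] [BorelSpace E] {μ : Measure E} [μ.IsAddHaarMeasure]
  [NormedAddCommGroup F] [NormedSpace ℝ F]

theorem ContDiff.integral_fderiv_apply_eq_zero {g : E → F} (hg : ContDiff ℝ 1 g)
    (hc : HasCompactSupport g) (v : E) : ∫ x, fderiv ℝ g x v ∂μ = 0 := by
  have hg' : Continuous fun x ↦ fderiv ℝ g x v :=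
    (hg.continuous_fderiv one_ne_zero).clm_apply continuous_const
  simpa using integral_smul_fderiv_eq_neg_fderiv_smul_of_integrable (μ := μ)
    (f := fun _ ↦ (1 : ℝ)) (g := g) (v := v) (by simp)
    (by simpa using hg'.integrable_of_hasCompactSupport (hc.fderiv_apply ℝ v))
    (by simpa using hg.continuous.integrable_of_hasCompactSupport hc)
    (fun _ _ ↦ differentiableAt_const _) (fun x _ ↦ hg.differentiable one_ne_zero x)

end Integral

section IntegralLaplacian

variable {E : Type*} [NormedAddCommGroup E] [InnerProductSpace ℝ E] [FiniteDimensional ℝ E]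
  [MeasurableSpace E] [BorelSpace E] {μ : Measure E} [μ.IsAddHaarMeasure]

theorem ContDiff.integral_laplacian_eq_zero {f : E → ℝ} (hf : ContDiff ℝ 2 f)
    (hc : HasCompactSupport f) : ∫ x, Δ f x ∂μ = 0 := by
  have hf1 (v : E) : ContDiff ℝ 1 fun y ↦ fderiv ℝ f y v :=
    (hf.fderiv_right (m := 1) (by norm_num)).clm_apply contDiff_const
  rw [laplacian_eq_sum_fderiv_fderiv hf (stdOrthonormalBasis ℝ E), integral_finsetSum]
  · exact Finset.sum_eq_zero fun i _ ↦
      (hf1 _).integral_fderiv_apply_eq_zero (hc.fderiv_apply ℝ _) _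
  · exact fun i _ ↦ (((hf1 _).continuous_fderiv one_ne_zero).clm_apply
      continuous_const).integrable_of_hasCompactSupport ((hc.fderiv_apply ℝ _).fderiv_apply ℝ _)

theorem integral_laplacian_eq_of_hasCompactSupport_sub {f g : E → ℝ} (hf : ContDiff ℝ 2 f)
    (hg : ContDiff ℝ 2 g) (hfg : HasCompactSupport (f - g)) (hint : Integrable (Δ g) μ) :
    ∫ x, Δ f x ∂μ = ∫ x, Δ g x ∂μ := by
  have hd : ContDiff ℝ 2 (f - g) := hf.sub hg
  have hsplit : Δ f = Δ (f - g) + Δ g := by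
    ext x
    rw [Pi.add_apply, ← hd.contDiffAt.laplacian_add hg.contDiffAt, sub_add_cancel]
  rw [hsplit, integral_add' (hd.continuous_laplacian.integrable_of_hasCompactSupport
      hfg.laplacian) hint, hd.integral_laplacian_eq_zero hfg, zero_add]

end IntegralLaplacian

section Radial

noncomputable def radialLaplacian (n : ℕ) (h : ℝ → ℝ) (t : ℝ) : ℝ :=
  2 * n * deriv h t + 4 * t * deriv (deriv h) t

theorem Filter.EventuallyEq.radialLaplacian_eq {n : ℕ} {h₁ h₂ : ℝ → ℝ} {t : ℝ}
    (h : h₁ =ᶠ[𝓝 t] h₂) : radialLaplacian n h₁ t = radialLaplacian n h₂ t := by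
  rw [radialLaplacian, radialLaplacian, h.deriv_eq, h.deriv.deriv_eq]

variable {E : Type*} [NormedAddCommGroup E] [InnerProductSpace ℝ E]

theorem HasDerivAt.hasFDerivAt_comp_norm_sq {h : ℝ → ℝ} {h' : ℝ} {x : E}
    (hh : HasDerivAt h h' (‖x‖ ^ 2)) :
    HasFDerivAt (fun y ↦ h (‖y‖ ^ 2)) (h' • 2 • innerSL ℝ x) x :=
  hh.comp_hasFDerivAt x (hasStrictFDerivAt_norm_sq x).hasFDerivAt

variable [FiniteDimensional ℝ E]

theorem laplacian_comp_norm_sq {h : ℝ → ℝ} (hh : ContDiff ℝ 2 h) (x : E) :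
    Δ (fun y : E ↦ h (‖y‖ ^ 2)) x = radialLaplacian (Module.finrank ℝ E) h (‖x‖ ^ 2) := by
  have hd : Differentiable ℝ h := hh.differentiable (by norm_num)
  have hd' : Differentiable ℝ (deriv h) := (hh.deriv' (n := 1)).differentiable one_ne_zero
  have hfirst (v : E) : (fun y ↦ fderiv ℝ (fun y ↦ h (‖y‖ ^ 2)) y v) =
      fun y ↦ deriv h (‖y‖ ^ 2) * (2 * ⟪v, y⟫) := by
    ext y
    rw [(hd _).hasDerivAt.hasFDerivAt_comp_norm_sq.fderiv]
    simp [real_inner_comm]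
  have hsecond (v : E) : fderiv ℝ (fun y ↦ deriv h (‖y‖ ^ 2) * (2 * ⟪v, y⟫)) x v =
      deriv (deriv h) (‖x‖ ^ 2) * (2 * ⟪x, v⟫) * (2 * ⟪v, x⟫) +
        deriv h (‖x‖ ^ 2) * (2 * ⟪v, v⟫) := by
    have := (hd' _).hasDerivAt.hasFDerivAt_comp_norm_sq.fun_mul
      (((innerSL ℝ v).hasFDerivAt (x := x)).const_mul 2)
    simp only [innerSL_apply_apply] at this
    rw [this.fderiv]
    simp
    ring
  let b := stdOrthonormalBasis ℝ E
  have hsq (c : ℝ) : ∑ i, c * (2 * ⟪x, b i⟫) * (2 * ⟪x, b i⟫) = 4 * ‖x‖ ^ 2 * c := by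
    rw [← b.sum_sq_inner_left x, Finset.mul_sum, Finset.sum_mul]
    exact Finset.sum_congr rfl fun _ _ ↦ by ring
  rw [laplacian_eq_sum_fderiv_fderiv (f := fun y : E ↦ h (‖y‖ ^ 2))
    (hh.comp (contDiff_norm_sq ℝ)) b]
  simp only [hfirst, hsecond, b.inner_eq_one, real_inner_comm x]
  rw [Finset.sum_add_distrib, hsq, Finset.sum_const, Finset.card_univ, Fintype.card_fin,
    nsmul_eq_mul, radialLaplacian]
  ring

theorem hasDerivAt_pow_mul_deriv_comp_sq {n : ℕ} (hn : n ≠ 0) {h : ℝ → ℝ}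
    (hh : ContDiff ℝ 2 h) (r : ℝ) :
    HasDerivAt (fun r ↦ 2 * r ^ n * deriv h (r ^ 2))
      (r ^ (n - 1) * radialLaplacian n h (r ^ 2)) r := by
  have hd' : Differentiable ℝ (deriv h) := (hh.deriv' (n := 1)).differentiable one_ne_zero
  refine (((hasDerivAt_pow n r).const_mul 2).mul
    ((hd' (r ^ 2)).hasDerivAt.comp r (hasDerivAt_pow 2 r))).congr_deriv ?_
  obtain ⟨k, rfl⟩ := Nat.exists_eq_add_one_of_ne_zero hn
  simp only [radialLaplacian, Function.comp_apply, Nat.add_sub_cancel]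
  push_cast
  ring

theorem integral_Ioi_pow_mul_radialLaplacian {n : ℕ} (hn : n ≠ 0) {h : ℝ → ℝ}
    (hh : ContDiff ℝ 2 h) {ρ : ℝ} (hρ : 0 ≤ ρ)
    (hharm : ∀ t, ρ ^ 2 < t → radialLaplacian n h t = 0) :
    ∫ r in Ioi 0, r ^ (n - 1) * radialLaplacian n h (r ^ 2) = 2 * ρ ^ n * deriv h (ρ ^ 2) := by
  have hcont : Continuous fun r ↦ r ^ (n - 1) * radialLaplacian n h (r ^ 2) := by
    have := hh.continuous_deriv (by norm_num)
    have := (hh.deriv' (n := 1)).continuous_deriv le_rfl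
    unfold radialLaplacian
    fun_prop
  rw [setIntegral_eq_of_subset_of_forall_sdiff_eq_zero measurableSet_Ioi Ioc_subset_Ioi_self,
    ← intervalIntegral.integral_of_le hρ,
    intervalIntegral.integral_eq_sub_of_hasDerivAt
      (fun r _ ↦ hasDerivAt_pow_mul_deriv_comp_sq hn hh r) (hcont.intervalIntegrable _ _)]
  · simp [hn]
  · rintro r ⟨hr0, hr⟩
    have hρr : ρ < r := not_le.mp fun h ↦ hr ⟨hr0, h⟩
    rw [hharm _ (by nlinarith), mul_zero]

theorem integral_laplacian_comp_norm_sq [MeasurableSpace E] [BorelSpace E] [Nontrivial E]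
    (μ : Measure E) [μ.IsAddHaarMeasure] {h : ℝ → ℝ} (hh : ContDiff ℝ 2 h) {ρ : ℝ} (hρ : 0 ≤ ρ)
    (hharm : ∀ t, ρ ^ 2 < t → radialLaplacian (Module.finrank ℝ E) h t = 0) :
    ∫ x, Δ (fun y : E ↦ h (‖y‖ ^ 2)) x ∂μ = Module.finrank ℝ E * μ.real (Metric.ball 0 1) *
      (2 * ρ ^ Module.finrank ℝ E * deriv h (ρ ^ 2)) := by
  simp_rw [laplacian_comp_norm_sq hh]
  rw [integral_fun_norm_addHaar μ fun r ↦ radialLaplacian (Module.finrank ℝ E) h (r ^ 2)]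
  simp only [smul_eq_mul, nsmul_eq_mul]
  rw [integral_Ioi_pow_mul_radialLaplacian Module.finrank_pos.ne' hh hρ hharm]
  ring

end Radial

section Coulomb

/-- The Coulomb potential `-1/r` as a function of `t = r²`. -/
noncomputable def coulomb (t : ℝ) : ℝ := -t ^ (-(1 / 2 : ℝ))

theorem coulomb_sq {r : ℝ} (hr : 0 ≤ r) : coulomb (r ^ 2) = -r⁻¹ := by
  rw [coulomb, ← Real.rpow_natCast, ← Real.rpow_mul hr]
  norm_num [Real.rpow_neg_one]

theorem hasDerivAt_coulomb {t : ℝ} (ht : 0 < t) :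
    HasDerivAt coulomb (t ^ (-(3 / 2 : ℝ)) / 2) t := by
  refine (Real.hasDerivAt_rpow_const (p := -(1 / 2 : ℝ)) (Or.inl ht.ne')).fun_neg.congr_deriv ?_
  norm_num [div_eq_inv_mul]

theorem deriv_coulomb_eventuallyEq {t : ℝ} (ht : 0 < t) :
    deriv coulomb =ᶠ[𝓝 t] fun s ↦ s ^ (-(3 / 2 : ℝ)) / 2 := by
  filter_upwards [Ioi_mem_nhds ht] with s hs using (hasDerivAt_coulomb hs).deriv

theorem radialLaplacian_three_coulomb {t : ℝ} (ht : 0 < t) :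
    radialLaplacian 3 coulomb t = 0 := by
  have hderiv2 : HasDerivAt (fun s ↦ s ^ (-(3 / 2 : ℝ)) / 2)
      (-(3 / 2 : ℝ) * t ^ (-(3 / 2 : ℝ) - 1) / 2) t :=
    (Real.hasDerivAt_rpow_const (Or.inl ht.ne')).div_const 2
  have hpow : t * t ^ (-(3 / 2 : ℝ) - 1) = t ^ (-(3 / 2 : ℝ)) := by
    rw [Real.rpow_sub_one ht.ne']
    field_simp
  rw [radialLaplacian, (hasDerivAt_coulomb ht).deriv, (deriv_coulomb_eventuallyEq ht).deriv_eq,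
    hderiv2.deriv]
  push_cast
  linear_combination -3 * hpow

noncomputable def smoothClamp (c t : ℝ) : ℝ := c + (t - c) * smoothTransition (t / c - 1)

theorem contDiff_smoothClamp {n : ℕ∞} (c : ℝ) : ContDiff ℝ n (smoothClamp c) := by
  have := smoothTransition.contDiff (n := n)
  unfold smoothClamp
  fun_prop

theorem le_smoothClamp {c : ℝ} (hc : 0 < c) (t : ℝ) : c ≤ smoothClamp c t := by
  rcases le_total t c with htc | htc
  · have : t / c - 1 ≤ 0 := by rwa [sub_nonpos, div_le_one hc]
    simp [smoothClamp, smoothTransition.zero_of_nonpos this]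
  · have := smoothTransition.nonneg (t / c - 1)
    unfold smoothClamp
    nlinarith

theorem smoothClamp_of_two_mul_le {c t : ℝ} (hc : 0 < c) (ht : 2 * c ≤ t) :
    smoothClamp c t = t := by
  have : 1 ≤ t / c - 1 := by rw [le_sub_iff_add_le, le_div_iff₀ hc]; linarith
  rw [smoothClamp, smoothTransition.one_of_one_le this]
  ring

noncomputable def regularizedCoulomb (R t : ℝ) : ℝ := coulomb (smoothClamp (R ^ 2 / 4) t)

variable {R : ℝ}

theorem contDiff_regularizedCoulomb (hR : R ≠ 0) : ContDiff ℝ 2 (regularizedCoulomb R) := by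
  have hc : 0 < R ^ 2 / 4 := by positivity
  exact ((contDiff_smoothClamp _).rpow_const_of_ne
    fun t ↦ (hc.trans_le (le_smoothClamp hc t)).ne').neg

theorem regularizedCoulomb_eventuallyEq (hR : R ≠ 0) {t : ℝ} (ht : R ^ 2 / 2 < t) :
    regularizedCoulomb R =ᶠ[𝓝 t] coulomb := by
  filter_upwards [Ioi_mem_nhds ht] with s hs
  rw [regularizedCoulomb, smoothClamp_of_two_mul_le (by positivity) (by linarith [mem_Ioi.mp hs])]

theorem regularizedCoulomb_sq (hR : 0 < R) {r : ℝ} (hr : R ≤ r) :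
    regularizedCoulomb R (r ^ 2) = -r⁻¹ := by
  have : R ^ 2 / 2 < r ^ 2 := by nlinarith
  rw [(regularizedCoulomb_eventuallyEq hR.ne' this).eq_of_nhds, coulomb_sq (hR.le.trans hr)]

theorem radialLaplacian_three_regularizedCoulomb (hR : R ≠ 0) {t : ℝ} (ht : R ^ 2 < t) :
    radialLaplacian 3 (regularizedCoulomb R) t = 0 := by
  have ht' : R ^ 2 / 2 < t := by linarith [sq_nonneg R]
  rw [(regularizedCoulomb_eventuallyEq hR ht').radialLaplacian_eq]
  exact radialLaplacian_three_coulomb ((sq_nonneg R).trans_lt ht)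

end Coulomb

section Euclidean3

variable {R : ℝ}

theorem laplacian3_eq_laplacian {f : EuclideanSpace ℝ (Fin 3) → ℝ} (hf : ContDiff ℝ 2 f) :
    laplacian3 f = Δ f := by
  rw [laplacian_eq_sum_fderiv_fderiv hf (EuclideanSpace.basisFun (Fin 3) ℝ)]
  ext x
  simp [laplacian3]

theorem integrable_laplacian_regularizedCoulomb (hR : 0 < R) :
    Integrable (Δ fun y : EuclideanSpace ℝ (Fin 3) ↦ regularizedCoulomb R (‖y‖ ^ 2)) := by
  have hφ : ContDiff ℝ 2 fun y : EuclideanSpace ℝ (Fin 3) ↦ regularizedCoulomb R (‖y‖ ^ 2) :=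
    (contDiff_regularizedCoulomb hR.ne').comp (contDiff_norm_sq ℝ)
  refine hφ.continuous_laplacian.integrable_of_hasCompactSupport <|
    HasCompactSupport.intro (isCompact_closedBall 0 R) fun x hx ↦ ?_
  rw [Metric.mem_closedBall, dist_zero_right, not_le] at hx
  rw [laplacian_comp_norm_sq (contDiff_regularizedCoulomb hR.ne'), finrank_euclideanSpace_fin]
  exact radialLaplacian_three_regularizedCoulomb hR.ne' (by nlinarith)

theorem integral_laplacian_regularizedCoulomb (hR : 0 < R) :
    ∫ x, Δ (fun y : EuclideanSpace ℝ (Fin 3) ↦ regularizedCoulomb R (‖y‖ ^ 2)) x = 4 * π := by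
  have hpow : (R ^ 2) ^ (-(3 / 2 : ℝ)) = (R ^ 3)⁻¹ := by
    rw [← Real.rpow_natCast R 2, ← Real.rpow_mul hR.le, ← Real.rpow_natCast R 3,
      ← Real.rpow_neg hR.le]
    norm_num
  have hflux : R ^ 3 * deriv (regularizedCoulomb R) (R ^ 2) = 1 / 2 := by
    rw [(regularizedCoulomb_eventuallyEq hR.ne' (by nlinarith)).deriv_eq,
      (hasDerivAt_coulomb (by positivity)).deriv, hpow]
    field_simp
  rw [integral_laplacian_comp_norm_sq volume (contDiff_regularizedCoulomb hR.ne') hR.le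
      fun t ht ↦ by
        rw [finrank_euclideanSpace_fin]
        exact radialLaplacian_three_regularizedCoulomb hR.ne' ht,
    finrank_euclideanSpace_fin, measureReal_def, EuclideanSpace.volume_ball_fin_three,
    mul_assoc 2, hflux, ENNReal.ofReal_one, one_pow, one_mul, ENNReal.toReal_ofReal (by positivity)]
  ring

end Euclidean3

theorem scattering_length_identity_general
    (V f : EuclideanSpace ℝ (Fin 3) → ℝ) (R a : ℝ) (hR : 0 < R)
    (hf : ContDiff ℝ 2 f)
    (heq : ∀ x, -laplacian3 f x + (1/2) * V x * f x = 0)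
    (hout : ∀ x : EuclideanSpace ℝ (Fin 3), R ≤ ‖x‖ → f x = 1 - a / ‖x‖) :
    ∫ x, V x * f x = 8 * π * a := by
  set φ : EuclideanSpace ℝ (Fin 3) → ℝ := fun y ↦ regularizedCoulomb R (‖y‖ ^ 2)
  have hφ : ContDiff ℝ 2 φ := (contDiff_regularizedCoulomb hR.ne').comp (contDiff_norm_sq ℝ)
  have hψ : ContDiff ℝ 2 fun x ↦ 1 + a • φ x := contDiff_const.add (hφ.const_smul a)
  have hfψ : HasCompactSupport (f - fun x ↦ 1 + a • φ x) := by
    refine HasCompactSupport.intro (isCompact_closedBall 0 R) fun x hx ↦ ?_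
    rw [Metric.mem_closedBall, dist_zero_right, not_le] at hx
    simp [φ, hout x hx.le, regularizedCoulomb_sq hR hx.le, div_eq_mul_inv]
    ring
  calc ∫ x, V x * f x = ∫ x, 2 * Δ f x := by
        congr 1 with x
        linarith [heq x, congrFun (laplacian3_eq_laplacian hf) x]
    _ = 2 * ∫ x, Δ (fun x ↦ 1 + a • φ x) x := by
        have hint : Integrable (Δ fun x ↦ 1 + a • φ x) := by
          rw [laplacian_const_add_smul hφ]
          exact (integrable_laplacian_regularizedCoulomb hR).smul a
        rw [integral_const_mul, integral_laplacian_eq_of_hasCompactSupport_sub hf hψ hfψ hint]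
    _ = 8 * π * a := by
        rw [laplacian_const_add_smul hφ]
        simp only [Pi.smul_apply, smul_eq_mul]
        rw [integral_const_mul, integral_laplacian_regularizedCoulomb hR]
        ring

theorem scattering_length_identity
    (V f : EuclideanSpace ℝ (Fin 3) → ℝ) (R a : ℝ) (hR : 0 < R)
    (hV : Continuous V) (hsupp : tsupport V ⊆ Metric.closedBall 0 R)
    (hf : ContDiff ℝ 2 f)
    (heq : ∀ x, -laplacian3 f x + (1/2) * V x * f x = 0)
    (hout : ∀ x : EuclideanSpace ℝ (Fin 3), R ≤ ‖x‖ → f x = 1 - a / ‖x‖) :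
    ∫ x, V x * f x = 8 * π * a :=
  scattering_length_identity_general V f R a hR hf heq hout
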